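/- For all k ≥ 3 and n ≥ 2, there exists a K_3-saturated subgraph of K_k^n with at most min{2kn + n^2 − 4n − 1, 3kn − 3n − 6} edges; that is, sat(K_3, K_k^n) ≤ min{2kn + n^2 − 4n − 1, 3kn − 3n − 6}. -/

import Mathlib

/-!
The two bounds come from two triangle-free graphs built around hubs: vertices `(i, z)` lying in
distinct parts `i` and in a common row `z`.

Joining every hub to every non-hub outside its own part gives a bipartite subgraph of `K_k^n`.
With at least three hubs it is saturated: two non-adjacent vertices in distinct parts are either
both non-hubs, with a common neighbour the hub of a third part, or both hubs, with a common
neighbour any vertex off row `z` (here `n ≥ 2` is needed) in a third hub part. Three hubs give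
`3(kn - n - 2)` edges.

With only two hubs `(i, z)` and `(j, z)`, adding all edges between the non-hubs of parts `i`
and `j` restores saturation. The graph stays triangle-free (it is a blow-up of a 5-cycle): the
hubs are not adjacent and an edge between non-hubs joins part `i` to part `j`, so every vertex
of a triangle would lie in part `i` or part `j`. It has `2(kn - n - 1) + (n - 1)^2` edges.
-/

open SimpleGraph

/-- The complete balanced `k`-partite graph with partite sets `V_i = {i} × Fin n`. -/
def multipartite (k n : ℕ) : SimpleGraph (Fin k × Fin n) where
  Adj u w := u.1 ≠ w.1
  symm := ⟨fun _ _ h => h.symm⟩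
  loopless := ⟨fun _ h => h rfl⟩

/-- `J` is a `K_t`-saturated subgraph of `G`. -/
def IsSatIn {V : Type*} (t : ℕ) (J G : SimpleGraph V) : Prop :=
  J ≤ G ∧ J.CliqueFree t ∧
    ∀ u w : V, G.Adj u w → ¬ J.Adj u w →
      ¬ (J ⊔ SimpleGraph.fromEdgeSet {s(u, w)}).CliqueFree t

open Finset

lemma isSatIn_three_of_exists_common_adj {V : Type*} {J G : SimpleGraph V} (hJG : J ≤ G)
    (hJ : J.CliqueFree 3)
    (h : ∀ u w, G.Adj u w → ¬ J.Adj u w → ∃ c, J.Adj u c ∧ J.Adj w c) :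
    IsSatIn 3 J G := by
  classical
  refine ⟨hJG, hJ, fun u w huw hJuw hfree => ?_⟩
  obtain ⟨c, huc, hwc⟩ := h u w huw hJuw
  refine hfree {u, w, c} (is3Clique_triple_iff.mpr ⟨?_, Or.inl huc, Or.inl hwc⟩)
  exact Or.inr (by simp [huw.ne])

lemma ncard_edgeSet_eq_sum_degree {V : Type*} [Fintype V] {G : SimpleGraph V} {s t : Finset V}
    [DecidableRel G.Adj] (h : G.IsBipartiteWith s t) :
    G.edgeSet.ncard = ∑ v ∈ s, G.degree v := by
  rw [isBipartiteWith_sum_degrees_eq_card_edges h, Set.ncard_eq_toFinset_card']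
  rfl

lemma ncard_edgeSet_between_le {V : Type*} [Fintype V] (G : SimpleGraph V) {s t : Finset V}
    (hst : Disjoint s t) : (G.between s t).edgeSet.ncard ≤ #s * #t := by
  classical
  have hbip := between_isBipartiteWith (G := G) (disjoint_coe.mpr hst)
  rw [ncard_edgeSet_eq_sum_degree hbip]
  exact (sum_le_sum fun v hv => isBipartiteWith_degree_le hbip hv).trans_eq (by simp)

lemma Finset.exists_mem_ne_ne {α : Type*} [DecidableEq α] {S : Finset α} (hS : 2 < #S)
    (a b : α) :
    ∃ l ∈ S, l ≠ a ∧ l ≠ b := by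
  have hpos : 0 < #((S.erase a).erase b) := by
    have := pred_card_le_card_erase (s := S) (a := a)
    have := pred_card_le_card_erase (s := S.erase a) (a := b)
    omega
  obtain ⟨l, hl⟩ := card_pos.mp hpos
  simp only [mem_erase] at hl
  exact ⟨l, hl.2.2, hl.2.1, hl.1⟩

variable {k n : ℕ}

def hubs (S : Finset (Fin k)) (z : Fin n) : Finset (Fin k × Fin n) := S ×ˢ {z}

@[simp]
lemma mem_hubs {S : Finset (Fin k)} {z : Fin n} {v : Fin k × Fin n} :
    v ∈ hubs S z ↔ v.1 ∈ S ∧ v.2 = z := by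
  simp only [hubs, mem_product, mem_singleton]

def hubGraph (S : Finset (Fin k)) (z : Fin n) : SimpleGraph (Fin k × Fin n) :=
  (multipartite k n).between (hubs S z) ↑(hubs S z)ᶜ

lemma hubGraph_adj {S : Finset (Fin k)} {z : Fin n} {u v : Fin k × Fin n} :
    (hubGraph S z).Adj u v ↔ u.1 ≠ v.1 ∧
      (u ∈ hubs S z ∧ v ∉ hubs S z ∨ v ∈ hubs S z ∧ u ∉ hubs S z) := by
  simp only [hubGraph, between_adj, coe_compl, Set.mem_compl_iff, mem_coe]
  exact Iff.rfl.and (by tauto)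

lemma hubGraph_le (S : Finset (Fin k)) (z : Fin n) : hubGraph S z ≤ multipartite k n :=
  between_le

lemma hubGraph_isBipartiteWith (S : Finset (Fin k)) (z : Fin n) :
    (hubGraph S z).IsBipartiteWith (hubs S z) ↑(hubs S z)ᶜ :=
  between_isBipartiteWith (disjoint_coe.mpr disjoint_compl_right)

lemma hubGraph_cliqueFree (S : Finset (Fin k)) (z : Fin n) : (hubGraph S z).CliqueFree 3 :=
  (hubGraph_isBipartiteWith S z).isBipartite.cliqueFree (by norm_num)

lemma neighborFinset_hubGraph {S : Finset (Fin k)} {z : Fin n} {i : Fin k}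
    [DecidableRel (hubGraph S z).Adj] (hi : i ∈ S) :
    (hubGraph S z).neighborFinset (i, z) = (univ.erase i ×ˢ univ) \ (S.erase i ×ˢ {z}) := by
  ext v
  simp only [mem_neighborFinset, hubGraph_adj, mem_hubs, mem_sdiff, mem_product, mem_erase,
    mem_univ, mem_singleton, hi, ne_comm (a := i)]
  tauto

lemma ncard_edgeSet_hubGraph (S : Finset (Fin k)) (z : Fin n) :
    ((hubGraph S z).edgeSet.ncard : ℤ) = #S * ((k - 1) * n - (#S - 1)) := by
  classical
  rw [ncard_edgeSet_eq_sum_degree (hubGraph_isBipartiteWith S z), hubs, sum_product]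
  simp only [sum_singleton, ← card_neighborFinset_eq_degree]
  have hdeg : ∀ i ∈ S,
      #((univ.erase i ×ˢ univ) \ (S.erase i ×ˢ {z})) = (k - 1) * n - (#S - 1) := by
    intro i hi
    rw [card_sdiff_of_subset (product_subset_product (erase_subset_erase i (subset_univ S))
      (subset_univ _)), card_product, card_product, card_erase_of_mem hi,
      card_erase_of_mem (mem_univ i), card_singleton, mul_one]
    simp only [card_univ, Fintype.card_fin]
  rw [sum_congr rfl fun i hi => by rw [neighborFinset_hubGraph hi, hdeg i hi], sum_const,
    smul_eq_mul]
  obtain rfl | ⟨i, hi⟩ := S.eq_empty_or_nonempty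
  · simp
  have hSk : #S ≤ k := (card_le_univ S).trans_eq (Fintype.card_fin k)
  have hS : #S - 1 ≤ (k - 1) * n := by
    have := Nat.le_mul_of_pos_right (k - 1) z.pos
    omega
  have h1 : 1 ≤ #S := card_pos.mpr ⟨i, hi⟩
  push_cast [Nat.cast_sub hS, Nat.cast_sub h1, Nat.cast_sub (h1.trans hSk)]
  ring

lemma isSatIn_hubGraph {S : Finset (Fin k)} (hS : 2 < #S) (hn : 1 < n) (z : Fin n) :
    IsSatIn 3 (hubGraph S z) (multipartite k n) := by
  refine isSatIn_three_of_exists_common_adj (hubGraph_le S z) (hubGraph_cliqueFree S z) ?_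
  intro u w (huw : u.1 ≠ w.1) hnadj
  rw [hubGraph_adj] at hnadj
  obtain ⟨l, hlS, hlu, hlw⟩ := S.exists_mem_ne_ne hS u.1 w.1
  by_cases hu : u ∈ hubs S z <;> by_cases hw : w ∈ hubs S z
  · obtain ⟨z', hz'⟩ := Fintype.exists_ne_of_one_lt_card (by simpa using hn) z
    have hl : (l, z') ∉ hubs S z := by simp [hz']
    exact ⟨(l, z'), hubGraph_adj.mpr ⟨hlu.symm, .inl ⟨hu, hl⟩⟩,
      hubGraph_adj.mpr ⟨hlw.symm, .inl ⟨hw, hl⟩⟩⟩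
  · exact absurd ⟨huw, .inl ⟨hu, hw⟩⟩ hnadj
  · exact absurd ⟨huw, .inr ⟨hw, hu⟩⟩ hnadj
  · have hl : (l, z) ∈ hubs S z := by simp [hlS]
    exact ⟨(l, z), hubGraph_adj.mpr ⟨hlu.symm, .inr ⟨hl, hu⟩⟩,
      hubGraph_adj.mpr ⟨hlw.symm, .inr ⟨hl, hw⟩⟩⟩

def offRow (i : Fin k) (z : Fin n) : Finset (Fin k × Fin n) := {i} ×ˢ univ.erase z

@[simp]
lemma mem_offRow {i : Fin k} {z : Fin n} {v : Fin k × Fin n} :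
    v ∈ offRow i z ↔ v.1 = i ∧ v.2 ≠ z := by
  simp only [offRow, mem_product, mem_singleton, mem_erase, mem_univ, and_true]

def twoHubGraph (i j : Fin k) (z : Fin n) : SimpleGraph (Fin k × Fin n) :=
  hubGraph {i, j} z ⊔ (multipartite k n).between (offRow i z) (offRow j z)

section twoHubGraph

variable {i j : Fin k} {z : Fin n}

lemma twoHubGraph_adj {u v : Fin k × Fin n} :
    (twoHubGraph i j z).Adj u v ↔ (hubGraph {i, j} z).Adj u v ∨
      u.1 ≠ v.1 ∧
        (u ∈ offRow i z ∧ v ∈ offRow j z ∨ u ∈ offRow j z ∧ v ∈ offRow i z) := by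
  simp only [twoHubGraph, sup_adj, between_adj, mem_coe]
  rfl

lemma twoHubGraph_le : twoHubGraph i j z ≤ multipartite k n :=
  sup_le (hubGraph_le _ _) between_le

lemma not_twoHubGraph_adj_of_mem_hubs {u v : Fin k × Fin n} (hu : u ∈ hubs {i, j} z)
    (hv : v ∈ hubs {i, j} z) : ¬ (twoHubGraph i j z).Adj u v := by
  rw [mem_hubs] at hu hv
  rw [twoHubGraph_adj, hubGraph_adj]
  simp only [mem_offRow, mem_hubs]
  tauto

lemma fst_eq_or_of_twoHubGraph_triangle {x y w : Fin k × Fin n}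
    (hxy : (twoHubGraph i j z).Adj x y) (hxw : (twoHubGraph i j z).Adj x w)
    (hyw : (twoHubGraph i j z).Adj y w) : x.1 = i ∨ x.1 = j := by
  by_cases hx : x ∈ hubs {i, j} z
  · simpa using (mem_hubs.mp hx).1
  have fst_or_mem_hubs : ∀ v, (twoHubGraph i j z).Adj x v →
      (x.1 = i ∨ x.1 = j) ∨ v ∈ hubs {i, j} z := by
    intro v hv
    rw [twoHubGraph_adj, hubGraph_adj] at hv
    simp only [mem_offRow] at hv
    tauto
  rcases fst_or_mem_hubs y hxy with h | hy
  · exact h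
  rcases fst_or_mem_hubs w hxw with h | hw
  · exact h
  exact absurd hyw (not_twoHubGraph_adj_of_mem_hubs hy hw)

lemma twoHubGraph_cliqueFree : (twoHubGraph i j z).CliqueFree 3 := by
  intro s hs
  obtain ⟨x, y, w, hxy, hxw, hyw, rfl⟩ := is3Clique_iff.mp hs
  have hx := fst_eq_or_of_twoHubGraph_triangle hxy hxw hyw
  have hy := fst_eq_or_of_twoHubGraph_triangle hxy.symm hyw hxw
  have hw := fst_eq_or_of_twoHubGraph_triangle hxw.symm hyw.symm hxy
  have hxy' : x.1 ≠ y.1 := twoHubGraph_le hxy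
  have hxw' : x.1 ≠ w.1 := twoHubGraph_le hxw
  have hyw' : y.1 ≠ w.1 := twoHubGraph_le hyw
  grind

lemma isSatIn_twoHubGraph {l : Fin k} (hij : i ≠ j) (hli : l ≠ i) (hlj : l ≠ j) :
    IsSatIn 3 (twoHubGraph i j z) (multipartite k n) := by
  refine isSatIn_three_of_exists_common_adj twoHubGraph_le twoHubGraph_cliqueFree ?_
  intro u w (huw : u.1 ≠ w.1) hnadj
  rw [twoHubGraph_adj, hubGraph_adj, not_or] at hnadj
  obtain ⟨hnhub, hncross⟩ := hnadj
  have hub_adj : ∀ {a b}, a ∈ hubs {i, j} z → b ∉ hubs {i, j} z → a.1 ≠ b.1 →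
      (twoHubGraph i j z).Adj a b := fun ha hb hab =>
    twoHubGraph_adj.mpr (.inl (hubGraph_adj.mpr ⟨hab, .inl ⟨ha, hb⟩⟩))
  by_cases hu : u ∈ hubs {i, j} z <;> by_cases hw : w ∈ hubs {i, j} z
  · have hl : (l, z) ∉ hubs {i, j} z := by simp [hli, hlj]
    have hu1 : u.1 ≠ l := by grind [mem_hubs]
    have hw1 : w.1 ≠ l := by grind [mem_hubs]
    exact ⟨(l, z), hub_adj hu hl hu1, hub_adj hw hl hw1⟩
  · exact absurd ⟨huw, .inl ⟨hu, hw⟩⟩ hnhub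
  · exact absurd ⟨huw, .inr ⟨hw, hu⟩⟩ hnhub
  · by_cases hi : u.1 ≠ i ∧ w.1 ≠ i
    · have : (i, z) ∈ hubs {i, j} z := by simp
      exact ⟨(i, z), (hub_adj this hu hi.1.symm).symm, (hub_adj this hw hi.2.symm).symm⟩
    by_cases hj : u.1 ≠ j ∧ w.1 ≠ j
    · have : (j, z) ∈ hubs {i, j} z := by simp
      exact ⟨(j, z), (hub_adj this hu hj.1.symm).symm, (hub_adj this hw hj.2.symm).symm⟩
    simp only [mem_hubs, mem_insert, mem_singleton] at hu hw
    simp only [mem_offRow] at hncross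
    grind

lemma card_offRow (i : Fin k) (z : Fin n) : #(offRow i z) = n - 1 := by
  simp [offRow, card_erase_of_mem]

lemma ncard_edgeSet_twoHubGraph_le (hij : i ≠ j) :
    ((twoHubGraph i j z).edgeSet.ncard : ℤ) ≤ 2 * k * n + (n : ℤ) ^ 2 - 4 * n - 1 := by
  have hsup : ((twoHubGraph i j z).edgeSet.ncard : ℤ) ≤ (hubGraph {i, j} z).edgeSet.ncard +
      ((multipartite k n).between (offRow i z) (offRow j z)).edgeSet.ncard := by
    rw [twoHubGraph, edgeSet_sup]
    exact_mod_cast Set.ncard_union_le _ _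
  have hhub : ((hubGraph {i, j} z).edgeSet.ncard : ℤ) = 2 * ((k - 1) * n - 1) := by
    rw [ncard_edgeSet_hubGraph, card_pair hij]
    norm_num
  have hcross : (((multipartite k n).between (offRow i z) (offRow j z)).edgeSet.ncard : ℤ) ≤
      (n - 1) * (n - 1) := by
    have hdisj : Disjoint (offRow i z) (offRow j z) :=
      disjoint_product.mpr (.inl (disjoint_singleton.mpr hij))
    have h := ncard_edgeSet_between_le (multipartite k n) hdisj
    rw [card_offRow, card_offRow] at h
    have hn : 1 ≤ n := z.pos
    zify [hn] at h
    exact h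
  nlinarith

end twoHubGraph

/-- There is a `K_3`-saturated subgraph of `K_k^n` with at most
`min (2kn + n² − 4n − 1) (3kn − 3n − 6)` edges. -/
theorem stmt_2 (k n : ℕ) (hk : 3 ≤ k) (hn : 2 ≤ n) :
    ∃ J : SimpleGraph (Fin k × Fin n), IsSatIn 3 J (multipartite k n) ∧
      (J.edgeSet.ncard : ℤ) ≤
        min (2 * k * n + (n : ℤ) ^ 2 - 4 * n - 1) (3 * (k:ℤ) * n - 3 * n - 6) := by
  let i : Fin k := ⟨0, by omega⟩
  let j : Fin k := ⟨1, by omega⟩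
  let l : Fin k := ⟨2, by omega⟩
  let z : Fin n := ⟨0, by omega⟩
  have hij : i ≠ j := by simp [i, j, Fin.ext_iff]
  have hli : l ≠ i := by simp [l, i, Fin.ext_iff]
  have hlj : l ≠ j := by simp [l, j, Fin.ext_iff]
  rcases le_total (2 * k * n + (n : ℤ) ^ 2 - 4 * n - 1) (3 * (k:ℤ) * n - 3 * n - 6) with h | h
  · exact ⟨twoHubGraph i j z, isSatIn_twoHubGraph hij hli hlj,
      (ncard_edgeSet_twoHubGraph_le hij).trans (le_min le_rfl h)⟩
  · have hS : #({i, j, l} : Finset (Fin k)) = 3 :=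
      card_eq_three.mpr ⟨i, j, l, hij, hli.symm, hlj.symm, rfl⟩
    have hcount : ((hubGraph {i, j, l} z).edgeSet.ncard : ℤ) = 3 * k * n - 3 * n - 6 := by
      rw [ncard_edgeSet_hubGraph, hS]
      ring
    exact ⟨hubGraph {i, j, l} z, isSatIn_hubGraph (by omega) (by omega) z,
      hcount.le.trans (le_min h le_rfl)⟩
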